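/- Let Z be a proper geodesic δ-hyperbolic space and g a loxodromic isometry with attracting fixed point y_g. Then for any geodesic ray σ with σ(∞) = y_g and any w ∈ Z, |β_σ(w, gw) − ℓ(g)| ≤ 92δ. -/

import Mathlib

open Filter Metric Set

noncomputable def gromovProd {Z : Type*} [MetricSpace Z] (x y z : Z) : ℝ :=
  (dist x y + dist x z - dist y z) / 2

/-- `Z` is δ-hyperbolic in the Gromov product sense. -/
def IsDeltaHyperbolic (Z : Type*) [MetricSpace Z] (δ : ℝ) : Prop :=
  ∀ w x y z : Z, min (gromovProd x w y) (gromovProd x y z) - δ ≤ gromovProd x w z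

/-- `f` parametrizes a geodesic segment from `x` to `y` by arclength on `[0, dist x y]`. -/
def IsGeodesicSegment {Z : Type*} [MetricSpace Z] (f : ℝ → Z) (x y : Z) : Prop :=
  f 0 = x ∧ f (dist x y) = y ∧
    ∀ s ∈ Set.Icc (0:ℝ) (dist x y), ∀ t ∈ Set.Icc (0:ℝ) (dist x y),
      dist (f s) (f t) = |s - t|

/-- `Z` is a geodesic metric space. -/
def IsGeodesicSpace (Z : Type*) [MetricSpace Z] : Prop :=
  ∀ x y : Z, ∃ f : ℝ → Z, IsGeodesicSegment f x y

/-- The image of the geodesic segment `[x,y]` parametrized by `f`. -/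
def segImage {Z : Type*} [MetricSpace Z] (f : ℝ → Z) (x y : Z) : Set Z :=
  f '' Set.Icc 0 (dist x y)

/-- A geodesic ray: an isometric embedding of `[0,∞)`. -/
def IsGeodesicRay {Z : Type*} [MetricSpace Z] (σ : ℝ → Z) : Prop :=
  ∀ s t : ℝ, 0 ≤ s → 0 ≤ t → dist (σ s) (σ t) = |s - t|

/-- A bi-infinite geodesic: an isometric embedding of `ℝ`. -/
def IsBiInfGeodesic {Z : Type*} [MetricSpace Z] (γ : ℝ → Z) : Prop :=
  ∀ s t : ℝ, dist (γ s) (γ t) = |s - t|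

/-- Two geodesic rays are asymptotic (same endpoint at infinity):
their images are at finite Hausdorff distance. -/
def AsymptoticRays {Z : Type*} [MetricSpace Z] (σ σ' : ℝ → Z) : Prop :=
  EMetric.hausdorffEdist (σ '' Set.Ici 0) (σ' '' Set.Ici 0) ≠ ⊤

/-- Extended Gromov product (with respect to `x`) of the two boundary points
represented by the geodesic rays `σ`, `σ'`. -/
noncomputable def extGP {Z : Type*} [MetricSpace Z] (x : Z) (σ σ' : ℝ → Z) : EReal :=
  Filter.liminf (fun p : ℝ × ℝ => ((gromovProd x (σ p.1) (σ' p.2) : ℝ) : EReal))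
    (Filter.atTop ×ˢ Filter.atTop)

/-- Extended Gromov product (with respect to `x`) of a point `y ∈ Z` and the boundary
point represented by the geodesic ray `σ`. -/
noncomputable def ptRayGP {Z : Type*} [MetricSpace Z] (x y : Z) (σ : ℝ → Z) : EReal :=
  Filter.liminf (fun t : ℝ => ((gromovProd x y (σ t) : ℝ) : EReal)) Filter.atTop

/-- The visual quasi-metric `d_x(ξ,η) = exp(-2⟨ξ,η⟩_x)` on the Gromov boundary,
for boundary points represented by geodesic rays. -/
noncomputable def visDist {Z : Type*} [MetricSpace Z] (x : Z) (σ σ' : ℝ → Z) : ℝ :=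
  if extGP x σ σ' = ⊤ then 0 else Real.exp (-2 * (extGP x σ σ').toReal)

/-!
Let `β` be the Busemann function of `σ`, so that `b = β w - β (g w)`, and recall that the
Busemann cocycles `β u - β v` of two asymptotic rays differ by at most `2δ` (hyperbolicity
applied to far-out points of the two rays).

Since every `gᵏ ∘ σ` is asymptotic to `σ`, `β` drops by at least `b - 2δ` along each step of
the orbit `gᵏ w`; as `β` is `1`-Lipschitz, `n (b - 2δ) ≤ d(w, gⁿ w)`, whence `b - 2δ ≤ ℓ`.
Conversely the orbit converges to `σ(∞)`, so for large `k` the Gromov product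
`(g^(k+1) w · σ(∞))_{gw}` exceeds `(w · σ(∞))_{gw}`, and hyperbolicity at the base point `gw`
bounds the increment `d(w, g^(k+1) w) - d(w, gᵏ w)` by `b + 2δ`, whence `ℓ ≤ b + 2δ`.
-/

open Topology

section Hyperbolic

variable {Z : Type*} [MetricSpace Z]

lemma gromovProd_comm (x y z : Z) : gromovProd x y z = gromovProd x z y := by
  unfold gromovProd; rw [dist_comm y z]; ring

lemma gromovProd_le_dist (x y z : Z) : gromovProd x y z ≤ dist x y := by
  have := dist_triangle x y z
  unfold gromovProd; linarith

lemma dist_sub_dist_le_gromovProd (x y z : Z) : dist x y - dist y z ≤ gromovProd x y z := by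
  have := dist_triangle x z y
  rw [dist_comm z y] at this
  unfold gromovProd; linarith

lemma IsDeltaHyperbolic.nonneg {δ : ℝ} (h : IsDeltaHyperbolic Z δ) (w : Z) : 0 ≤ δ := by
  have hw := h w w w w
  simp only [gromovProd, dist_self, add_zero, sub_zero, zero_div, min_self] at hw
  linarith

lemma IsGeodesicRay.dist_origin {τ : ℝ → Z} (hτ : IsGeodesicRay τ) {t : ℝ} (ht : 0 ≤ t) :
    dist (τ 0) (τ t) = t := by
  rw [hτ 0 t le_rfl ht, zero_sub, abs_neg, abs_of_nonneg ht]

lemma IsGeodesicRay.sub_le_dist {τ : ℝ → Z} (hτ : IsGeodesicRay τ) (v : Z) {t : ℝ} (ht : 0 ≤ t) :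
    t - dist v (τ 0) ≤ dist v (τ t) := by
  have := dist_triangle (τ 0) v (τ t)
  rw [IsGeodesicRay.dist_origin hτ ht, dist_comm] at this
  linarith

lemma IsGeodesicRay.dist_le {τ : ℝ → Z} (hτ : IsGeodesicRay τ) (v : Z) {t : ℝ} (ht : 0 ≤ t) :
    dist v (τ t) ≤ dist v (τ 0) + t := by
  simpa only [IsGeodesicRay.dist_origin hτ ht] using dist_triangle v (τ 0) (τ t)

lemma IsGeodesicRay.min_sub_le_gromovProd {τ : ℝ → Z} (hτ : IsGeodesicRay τ) (v : Z)
    {s t : ℝ} (hs : 0 ≤ s) (ht : 0 ≤ t) :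
    min s t - dist v (τ 0) ≤ gromovProd v (τ s) (τ t) := by
  have hvs := IsGeodesicRay.sub_le_dist hτ v hs
  have hvt := IsGeodesicRay.sub_le_dist hτ v ht
  unfold gromovProd
  rw [hτ s t hs ht]
  rcases le_total s t with hst | hst
  · rw [min_eq_left hst, abs_of_nonpos (by linarith)]; linarith
  · rw [min_eq_right hst, abs_of_nonneg (by linarith)]; linarith

lemma asymptoticRays_iff {σ τ : ℝ → Z} :
    AsymptoticRays σ τ ↔ hausdorffEDist (σ '' Ici 0) (τ '' Ici 0) ≠ ⊤ :=
  Iff.rfl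

lemma AsymptoticRays.symm {σ τ : ℝ → Z} (h : AsymptoticRays σ τ) : AsymptoticRays τ σ := by
  rwa [asymptoticRays_iff, hausdorffEDist_comm]

lemma AsymptoticRays.trans {σ τ ρ : ℝ → Z} (h₁ : AsymptoticRays σ τ) (h₂ : AsymptoticRays τ ρ) :
    AsymptoticRays σ ρ :=
  ne_top_of_le_ne_top (ENNReal.add_ne_top.2 ⟨h₁, h₂⟩) hausdorffEDist_triangle

lemma AsymptoticRays.isometry_comp {σ τ : ℝ → Z} (h : AsymptoticRays σ τ) {f : Z → Z}
    (hf : Isometry f) : AsymptoticRays (fun t => f (σ t)) (fun t => f (τ t)) := by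
  rwa [asymptoticRays_iff, ← image_image f σ, ← image_image f τ, hausdorffEDist_image hf]

lemma AsymptoticRays.exists_dist_le {σ τ : ℝ → Z} (h : AsymptoticRays σ τ) :
    ∃ H : ℝ, ∀ s, 0 ≤ s → ∃ t, 0 ≤ t ∧ dist (σ s) (τ t) ≤ H := by
  refine ⟨hausdorffDist (σ '' Ici 0) (τ '' Ici 0) + 1, fun s hs => ?_⟩
  obtain ⟨_, ⟨t, ht, rfl⟩, hst⟩ :=
    exists_dist_lt_of_hausdorffDist_lt (mem_image_of_mem σ (mem_Ici.2 hs)) (lt_add_one _) h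
  exact ⟨t, ht, hst.le⟩

lemma AsymptoticRays.exists_min_sub_le_gromovProd {δ : ℝ} (hhyp : IsDeltaHyperbolic Z δ)
    {σ τ : ℝ → Z} (hσ : IsGeodesicRay σ) (hτ : IsGeodesicRay τ) (h : AsymptoticRays σ τ)
    (v : Z) : ∃ C : ℝ, ∀ s, 0 ≤ s → ∀ t, 0 ≤ t → min s t - C ≤ gromovProd v (σ s) (τ t) := by
  obtain ⟨H, hH⟩ := AsymptoticRays.exists_dist_le h
  refine ⟨dist v (σ 0) + 2 * dist v (τ 0) + H + δ, fun s hs t ht => ?_⟩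
  obtain ⟨t', ht', hss'⟩ := hH s hs
  have hvs := IsGeodesicRay.sub_le_dist hσ v hs
  have hfar : s - dist v (σ 0) - dist v (τ 0) - H ≤ t' := by
    linarith [dist_triangle_right v (σ s) (τ t'), IsGeodesicRay.dist_le hτ v ht']
  have hnear := dist_sub_dist_le_gromovProd v (σ s) (τ t')
  have hτt := IsGeodesicRay.min_sub_le_gromovProd hτ v ht' ht
  have hc₀ : 0 ≤ dist v (σ 0) := dist_nonneg
  have hc₁ : 0 ≤ dist v (τ 0) := dist_nonneg
  have hH₀ : 0 ≤ H := dist_nonneg.trans hss'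
  have hmin : min s t - (dist v (σ 0) + 2 * dist v (τ 0) + H) ≤
      min (gromovProd v (σ s) (τ t')) (gromovProd v (τ t') (τ t)) := by
    refine le_min (by linarith [min_le_left s t]) ?_
    have : min s t - (dist v (σ 0) + dist v (τ 0) + H) ≤ min t' t :=
      le_min (by linarith [min_le_left s t]) (by linarith [min_le_right s t])
    linarith
  linarith [hhyp (σ s) v (τ t') (τ t)]

lemma IsGeodesicRay.isometry_comp {τ : ℝ → Z} (hτ : IsGeodesicRay τ) {f : Z → Z}
    (hf : Isometry f) : IsGeodesicRay (fun t => f (τ t)) := fun s t hs ht => by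
  rw [hf.dist_eq, hτ s t hs ht]

lemma AsymptoticRays.pow_apply {σ : ℝ → Z} {g : Z ≃ᵢ Z} (h : AsymptoticRays (fun t => g (σ t)) σ)
    (k : ℕ) : AsymptoticRays (fun t => (g ^ k) (σ t)) σ := by
  induction k with
  | zero =>
    simp only [pow_zero, IsometryEquiv.coe_one, id_eq]
    rw [asymptoticRays_iff, hausdorffEDist_self]
    exact ENNReal.zero_ne_top
  | succ k ih =>
    simp only [pow_succ', IsometryEquiv.mul_apply]
    exact (ih.isometry_comp g.isometry).trans h

/-- `lim_{t → ∞} (d(z, τ t) - t)`, a nonincreasing limit (`tendsto_busemann`). -/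
noncomputable def busemann (τ : ℝ → Z) (z : Z) : ℝ :=
  ⨅ t : ℝ, (dist z (τ (max t 0)) - max t 0)

lemma tendsto_busemann {τ : ℝ → Z} (hτ : IsGeodesicRay τ) (z : Z) :
    Tendsto (fun t => dist z (τ t) - t) atTop (𝓝 (busemann τ z)) := by
  have hanti : Antitone (fun t : ℝ => dist z (τ (max t 0)) - max t 0) := by
    intro s t hst
    have hd := dist_triangle z (τ (max s 0)) (τ (max t 0))
    rw [hτ _ _ (le_max_right s 0) (le_max_right t 0),
      abs_of_nonpos (by linarith [max_le_max_right 0 hst])] at hd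
    dsimp only
    linarith
  have hbdd : BddBelow (range fun t : ℝ => dist z (τ (max t 0)) - max t 0) := by
    refine ⟨-dist z (τ 0), ?_⟩
    rintro _ ⟨t, rfl⟩
    have := IsGeodesicRay.sub_le_dist hτ z (le_max_right t 0)
    dsimp only
    linarith
  refine (tendsto_atTop_ciInf hanti hbdd).congr' ?_
  filter_upwards [eventually_ge_atTop 0] with t ht
  rw [max_eq_left ht]

lemma tendsto_dist_sub_dist {τ : ℝ → Z} (hτ : IsGeodesicRay τ) (u v : Z) :
    Tendsto (fun t => dist u (τ t) - dist v (τ t)) atTop (𝓝 (busemann τ u - busemann τ v)) :=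
  ((tendsto_busemann hτ u).sub (tendsto_busemann hτ v)).congr fun t => by ring

lemma busemann_sub_busemann_le_dist {τ : ℝ → Z} (hτ : IsGeodesicRay τ) (u v : Z) :
    busemann τ u - busemann τ v ≤ dist u v :=
  le_of_tendsto' (tendsto_dist_sub_dist hτ u v) fun t => by
    linarith [dist_triangle u v (τ t)]

lemma busemann_isometry_comp (τ : ℝ → Z) {f : Z → Z} (hf : Isometry f) (z : Z) :
    busemann (fun t => f (τ t)) (f z) = busemann τ z := by
  simp only [busemann, hf.dist_eq]

/-- The Gromov product `(y · τ(∞))_x` (`tendsto_gromovProd_rayGromovProd`). -/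
noncomputable def rayGromovProd (τ : ℝ → Z) (x y : Z) : ℝ :=
  (dist x y + busemann τ x - busemann τ y) / 2

lemma tendsto_gromovProd_rayGromovProd {τ : ℝ → Z} (hτ : IsGeodesicRay τ) (x y : Z) :
    Tendsto (fun t => gromovProd x y (τ t)) atTop (𝓝 (rayGromovProd τ x y)) := by
  have := ((tendsto_dist_sub_dist hτ x y).const_add (dist x y)).div_const 2
  rw [← add_sub_assoc] at this
  exact this.congr fun t => by unfold gromovProd; ring

lemma busemann_sub_busemann_eq (τ : ℝ → Z) (x y : Z) :
    busemann τ y - busemann τ x = dist x y - 2 * rayGromovProd τ x y := by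
  unfold rayGromovProd; ring

lemma rayGromovProd_sub_rayGromovProd_le {τ : ℝ → Z} (hτ : IsGeodesicRay τ) (x y x' y' : Z) :
    rayGromovProd τ x y - rayGromovProd τ x' y' ≤ dist x x' + dist y y' := by
  have := dist_triangle4 x x' y' y
  have := busemann_sub_busemann_le_dist hτ x x'
  have := busemann_sub_busemann_le_dist hτ y' y
  rw [dist_comm y' y] at *
  unfold rayGromovProd
  linarith

lemma IsDeltaHyperbolic.min_rayGromovProd_le {δ : ℝ} (hhyp : IsDeltaHyperbolic Z δ)
    {τ : ℝ → Z} (hτ : IsGeodesicRay τ) (x y z : Z) :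
    min (rayGromovProd τ x y) (rayGromovProd τ x z) ≤ gromovProd x y z + δ := by
  refine le_of_tendsto ((tendsto_gromovProd_rayGromovProd hτ x y).min
    (tendsto_gromovProd_rayGromovProd hτ x z)) (Eventually.of_forall fun t => ?_)
  have := hhyp y x (τ t) z
  rw [gromovProd_comm x (τ t) z] at this
  linarith

lemma IsDeltaHyperbolic.rayGromovProd_sub_le_of_asymptotic {δ : ℝ}
    (hhyp : IsDeltaHyperbolic Z δ) {τ τ' : ℝ → Z} (hτ : IsGeodesicRay τ) (hτ' : IsGeodesicRay τ')
    (h : AsymptoticRays τ τ') (x y : Z) :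
    rayGromovProd τ x y - δ ≤ rayGromovProd τ' x y := by
  obtain ⟨C, hC⟩ := AsymptoticRays.exists_min_sub_le_gromovProd hhyp hτ hτ' h x
  have hfar : ∀ t, max 0 (C + dist x y) ≤ t → gromovProd x y (τ t) - δ ≤ rayGromovProd τ' x y := by
    intro t ht
    have ht₀ : 0 ≤ t := (le_max_left _ _).trans ht
    refine ge_of_tendsto (tendsto_gromovProd_rayGromovProd hτ' x y) ?_
    filter_upwards [eventually_ge_atTop t] with s hs
    have hts := hC t ht₀ s (ht₀.trans hs)
    rw [min_eq_left hs] at hts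
    have hmin : min (gromovProd x y (τ t)) (gromovProd x (τ t) (τ' s)) = gromovProd x y (τ t) :=
      min_eq_left (by linarith [gromovProd_le_dist x y (τ t), le_max_right 0 (C + dist x y)])
    linarith [hhyp y x (τ t) (τ' s)]
  exact le_of_tendsto ((tendsto_gromovProd_rayGromovProd hτ x y).sub_const δ)
    (eventually_atTop.2 ⟨_, hfar⟩)

lemma IsDeltaHyperbolic.busemann_sub_busemann_le_of_asymptotic {δ : ℝ}
    (hhyp : IsDeltaHyperbolic Z δ) {τ τ' : ℝ → Z} (hτ : IsGeodesicRay τ) (hτ' : IsGeodesicRay τ')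
    (h : AsymptoticRays τ τ') (u v : Z) :
    busemann τ' u - busemann τ' v ≤ busemann τ u - busemann τ v + 2 * δ := by
  rw [busemann_sub_busemann_eq τ v u, busemann_sub_busemann_eq τ' v u]
  linarith [hhyp.rayGromovProd_sub_le_of_asymptotic hτ hτ' h v u]

lemma IsDeltaHyperbolic.busemann_sub_busemann_le_apply {δ : ℝ} (hhyp : IsDeltaHyperbolic Z δ)
    {σ : ℝ → Z} (hσ : IsGeodesicRay σ) {f : Z → Z} (hf : Isometry f)
    (hfix : AsymptoticRays (fun t => f (σ t)) σ) (u v : Z) :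
    busemann σ u - busemann σ v ≤ busemann σ (f u) - busemann σ (f v) + 2 * δ := by
  have := hhyp.busemann_sub_busemann_le_of_asymptotic hσ (hσ.isometry_comp hf) hfix.symm (f u) (f v)
  rwa [busemann_isometry_comp σ hf, busemann_isometry_comp σ hf] at this

end Hyperbolic

lemma le_add_mul_of_forall_succ_sub_le {u : ℕ → ℝ} {c : ℝ} {N : ℕ}
    (h : ∀ k ≥ N, u (k + 1) - u k ≤ c) : ∀ n ≥ N, u n ≤ u N + ((n : ℝ) - N) * c := by
  refine Nat.le_induction (by simp) fun n hn ih => ?_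
  push_cast
  linarith [h n hn]

lemma le_of_tendsto_div_of_eventually_succ_sub_le {u : ℕ → ℝ} {ℓ c : ℝ}
    (h : Tendsto (fun n : ℕ => u n / n) atTop (𝓝 ℓ))
    (hu : ∀ᶠ k in atTop, u (k + 1) - u k ≤ c) : ℓ ≤ c := by
  obtain ⟨N, hN⟩ := eventually_atTop.1 hu
  have hlim : Tendsto (fun n : ℕ => (u N - N * c) / n + c) atTop (𝓝 c) := by
    simpa using (tendsto_const_div_atTop_nhds_zero_nat (u N - N * c)).add_const c
  refine le_of_tendsto_of_tendsto h hlim (eventually_atTop.2 ⟨N + 1, fun n hn => ?_⟩)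
  show u n / n ≤ (u N - N * c) / n + c
  have hn₀ : (0 : ℝ) < n := by exact_mod_cast (Nat.succ_pos N).trans_le hn
  rw [div_add' _ _ _ hn₀.ne', div_le_div_iff_of_pos_right hn₀]
  linarith [le_add_mul_of_forall_succ_sub_le hN n (by omega)]

section Orbits

variable {Z : Type*} [MetricSpace Z]

lemma tendsto_dist_pow_div (g : Z ≃ᵢ Z) {x : Z} {ℓ : ℝ}
    (h : Tendsto (fun n : ℕ => dist x ((g ^ n) x) / n) atTop (𝓝 ℓ)) (w : Z) :
    Tendsto (fun n : ℕ => dist w ((g ^ n) w) / n) atTop (𝓝 ℓ) := by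
  have hclose : ∀ n : ℕ, |dist w ((g ^ n) w) - dist x ((g ^ n) x)| ≤ 2 * dist w x := by
    intro n
    have := dist_dist_dist_le w ((g ^ n) w) x ((g ^ n) x)
    rw [Real.dist_eq, (g ^ n).dist_eq] at this
    linarith
  have hsmall : Tendsto (fun n : ℕ => (dist w ((g ^ n) w) - dist x ((g ^ n) x)) / n)
      atTop (𝓝 0) := by
    refine squeeze_zero_norm (fun n => ?_) (tendsto_const_div_atTop_nhds_zero_nat (2 * dist w x))
    rw [Real.norm_eq_abs, abs_div, Nat.abs_cast]
    exact div_le_div_of_nonneg_right (hclose n) n.cast_nonneg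
  simpa using (h.add hsmall).congr fun n => by ring

lemma tendsto_rayGromovProd_of_tendsto_gromovProd {τ : ℝ → Z} (hτ : IsGeodesicRay τ) {x : Z}
    {y : ℕ → Z}
    (h : Tendsto (fun p : ℕ × ℝ => gromovProd x (y p.1) (τ p.2)) (atTop ×ˢ atTop) atTop) :
    Tendsto (fun m => rayGromovProd τ x (y m)) atTop atTop := by
  rw [prod_atTop_atTop_eq] at h
  refine tendsto_atTop.2 fun M => ?_
  obtain ⟨⟨N, S⟩, hNS⟩ := eventually_atTop.1 (h.eventually_ge_atTop M)
  refine eventually_atTop.2 ⟨N, fun m hm => ?_⟩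
  exact ge_of_tendsto (tendsto_gromovProd_rayGromovProd hτ x (y m))
    (eventually_atTop.2 ⟨S, fun s hs => hNS (m, s) ⟨hm, hs⟩⟩)

lemma IsDeltaHyperbolic.tendsto_rayGromovProd_pow_apply {δ : ℝ} (hhyp : IsDeltaHyperbolic Z δ)
    {γ σ : ℝ → Z} (hγ : IsGeodesicRay γ) (hσ : IsGeodesicRay σ) (hγσ : AsymptoticRays γ σ)
    (g : Z ≃ᵢ Z) {x : Z}
    (h : Tendsto (fun p : ℕ × ℝ => gromovProd x ((g ^ p.1) x) (γ p.2)) (atTop ×ˢ atTop) atTop)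
    (v w : Z) : Tendsto (fun m : ℕ => rayGromovProd σ v ((g ^ m) w)) atTop atTop := by
  have hγx := tendsto_rayGromovProd_of_tendsto_gromovProd (y := fun m => (g ^ m) x) hγ h
  refine tendsto_atTop_mono (fun m => ?_)
    (tendsto_atTop_add_const_right _ (-(δ + dist x v + dist x w)) hγx)
  have := hhyp.rayGromovProd_sub_le_of_asymptotic hγ hσ hγσ x ((g ^ m) x)
  have := rayGromovProd_sub_rayGromovProd_le hσ x ((g ^ m) x) v ((g ^ m) w)
  rw [(g ^ m).dist_eq] at this
  linarith

lemma IsDeltaHyperbolic.busemann_sub_busemann_apply_le {δ ℓ : ℝ} (hhyp : IsDeltaHyperbolic Z δ)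
    {σ : ℝ → Z} (hσ : IsGeodesicRay σ) {g : Z ≃ᵢ Z} (hgσ : AsymptoticRays (fun t => g (σ t)) σ)
    {w : Z} (hℓ : Tendsto (fun n : ℕ => dist w ((g ^ n) w) / n) atTop (𝓝 ℓ)) :
    busemann σ w - busemann σ (g w) ≤ ℓ + 2 * δ := by
  set c := busemann σ w - busemann σ (g w) - 2 * δ
  have hstep : ∀ k ≥ 0, busemann σ ((g ^ (k + 1)) w) - busemann σ ((g ^ k) w) ≤ -c := by
    intro k _
    have := hhyp.busemann_sub_busemann_le_apply hσ (g ^ k).isometry (hgσ.pow_apply k) w (g w)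
    rw [pow_succ, IsometryEquiv.mul_apply]
    linarith
  have hdrift : ∀ n : ℕ, n * c ≤ dist w ((g ^ n) w) := fun n => by
    have := le_add_mul_of_forall_succ_sub_le (u := fun k => busemann σ ((g ^ k) w)) hstep n
      n.zero_le
    simp only [pow_zero, IsometryEquiv.coe_one, id_eq, Nat.cast_zero, sub_zero] at this
    linarith [busemann_sub_busemann_le_dist hσ w ((g ^ n) w)]
  suffices c ≤ ℓ by linarith
  refine ge_of_tendsto hℓ (eventually_atTop.2 ⟨1, fun n hn => ?_⟩)
  rw [le_div_iff₀ (by exact_mod_cast hn), mul_comm]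
  exact hdrift n

lemma IsDeltaHyperbolic.le_busemann_sub_busemann_apply {δ ℓ : ℝ} (hhyp : IsDeltaHyperbolic Z δ)
    {σ : ℝ → Z} (hσ : IsGeodesicRay σ) {g : Z ≃ᵢ Z} {w : Z}
    (hconv : Tendsto (fun m : ℕ => rayGromovProd σ (g w) ((g ^ m) w)) atTop atTop)
    (hℓ : Tendsto (fun n : ℕ => dist w ((g ^ n) w) / n) atTop (𝓝 ℓ)) :
    ℓ ≤ busemann σ w - busemann σ (g w) + 2 * δ := by
  suffices ∀ᶠ k in atTop, dist w ((g ^ (k + 1)) w) - dist w ((g ^ k) w) ≤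
      busemann σ w - busemann σ (g w) + 2 * δ from
    le_of_tendsto_div_of_eventually_succ_sub_le hℓ this
  filter_upwards [((tendsto_add_atTop_iff_nat 1).2 hconv).eventually_ge_atTop
    (rayGromovProd σ (g w) w)] with k hk
  have hmin := hhyp.min_rayGromovProd_le hσ (g w) w ((g ^ (k + 1)) w)
  rw [min_eq_left hk] at hmin
  have hshift : dist (g w) ((g ^ (k + 1)) w) = dist w ((g ^ k) w) := by
    rw [pow_succ', IsometryEquiv.mul_apply, g.dist_eq]
  rw [busemann_sub_busemann_eq σ (g w) w]
  unfold gromovProd at hmin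
  rw [hshift] at hmin
  linarith

end Orbits

theorem stmt19_general {Z : Type*} [MetricSpace Z] {δ : ℝ}
    (hhyp : IsDeltaHyperbolic Z δ)
    (g : Z ≃ᵢ Z)
    (γ : ℝ → Z) (hγ : IsBiInfGeodesic γ)
    (hgpos : AsymptoticRays (fun t => g (γ t)) (fun t => γ t))
    (hattr : Filter.Tendsto
      (fun p : ℕ × ℝ => gromovProd (γ 0) ((g ^ p.1) (γ 0)) (γ p.2))
      (Filter.atTop ×ˢ Filter.atTop) Filter.atTop)
    (ℓ : ℝ)
    (hℓ : Filter.Tendsto (fun n : ℕ => dist (γ 0) ((g ^ n) (γ 0)) / n)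
      Filter.atTop (nhds ℓ))
    (σ : ℝ → Z) (hσ : IsGeodesicRay σ)
    (hσasym : AsymptoticRays σ (fun t => γ t))
    (w : Z) (b : ℝ)
    (hb : Filter.Tendsto (fun t => dist w (σ t) - dist (g w) (σ t))
      Filter.atTop (nhds b)) :
    |b - ℓ| ≤ 92 * δ := by
  have hδ : 0 ≤ δ := hhyp.nonneg w
  have hγray : IsGeodesicRay γ := fun s t _ _ => hγ s t
  have hgσ : AsymptoticRays (fun t => g (σ t)) σ :=
    ((hσasym.isometry_comp g.isometry).trans hgpos).trans hσasym.symm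
  have horbit := tendsto_dist_pow_div g hℓ w
  have hupper := hhyp.busemann_sub_busemann_apply_le hσ hgσ horbit
  have hlower := hhyp.le_busemann_sub_busemann_apply hσ
    (hhyp.tendsto_rayGromovProd_pow_apply hγray hσ hσasym.symm g hattr (g w) w) horbit
  rw [tendsto_nhds_unique hb (tendsto_dist_sub_dist hσ w (g w)), abs_le]
  constructor <;> linarith

/-- For a loxodromic isometry `g` with axis `γ`, any geodesic ray `σ` with endpoint the
attracting fixed point and any `w ∈ Z`: `|β_σ(w, gw) − ℓ(g)| ≤ 92δ`. -/
theorem stmt19 {Z : Type*} [MetricSpace Z] [ProperSpace Z] {δ : ℝ}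
    (hgeo : IsGeodesicSpace Z) (hhyp : IsDeltaHyperbolic Z δ)
    (g : Z ≃ᵢ Z)
    (γ : ℝ → Z) (hγ : IsBiInfGeodesic γ)
    (hgpos : AsymptoticRays (fun t => g (γ t)) (fun t => γ t))
    (hgneg : AsymptoticRays (fun t => g (γ (-t))) (fun t => γ (-t)))
    (hattr : Filter.Tendsto
      (fun p : ℕ × ℝ => gromovProd (γ 0) ((g ^ p.1) (γ 0)) (γ p.2))
      (Filter.atTop ×ˢ Filter.atTop) Filter.atTop)
    (ℓ : ℝ)
    (hℓ : Filter.Tendsto (fun n : ℕ => dist (γ 0) ((g ^ n) (γ 0)) / n)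
      Filter.atTop (nhds ℓ))
    (σ : ℝ → Z) (hσ : IsGeodesicRay σ)
    (hσasym : AsymptoticRays σ (fun t => γ t))
    (w : Z) (b : ℝ)
    (hb : Filter.Tendsto (fun t => dist w (σ t) - dist (g w) (σ t))
      Filter.atTop (nhds b)) :
    |b - ℓ| ≤ 92 * δ :=
  stmt19_general hhyp g γ hγ hgpos hattr ℓ hℓ σ hσ hσasym w b hb
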